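/- Let G = A * B be a free product of nontrivial groups where A contains an element of order at least 3. Then the palindromic width of G is infinite: for every k there exists g ∈ G that is not a product of k palindromes. -/

import Mathlib

open Monoid Monoid.CoprodI

attribute [local instance] Classical.propDecidable

/-- The list of syllables of the reduced word representing `g`. -/
noncomputable def syllables {ι : Type*} {M : ι → Type*} [∀ i, Group (M i)]
    (g : CoprodI M) : List (Σ i, M i) :=
  letI := Classical.decEq ι
  letI : ∀ i, DecidableEq (M i) := fun _ => Classical.decEq _
  (Word.equiv g).toList

/-- `g` is a palindrome iff its reduced word reads the same backwards. -/
noncomputable def IsPalindrome {ι : Type*} {M : ι → Type*} [∀ i, Group (M i)]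
    (g : CoprodI M) : Prop :=
  (syllables g).reverse = syllables g

/-!
A counting quasimorphism in the style of Brooks, made antisymmetric under reversal. For a
word `w` over `A` let `c_w(L)` be the number of occurrences of `w` as a segment of `L`, and

  `φ(L) = c_w(L) - c_w(rev L) + c_{w⁻¹}(L) - c_{w⁻¹}(rev L)`,

where `w⁻¹` inverts letterwise. Then `φ(rev L) = -φ(L)` and `φ` is invariant under letterwise
inversion. Evaluate `φ` on the `A`-syllables of the reduced word of `g`. Palindromes get the
value `0`. The reduced word of `g h` arises from those of `g = P U S` and `h = S⁻¹ V T` as `P C T`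
with `U, V, C` of length at most one, and `φ` is additive up to `2 |w|` under concatenation, so
`φ(g h) - φ(g) - φ(h)` is bounded, and hence a product of `k` palindromes has `|φ| ≤ 66 k`
for the pattern `w = a a a a⁻¹ a`. On the other hand, when `a ≠ a⁻¹` this `w` occurs once
in every period of `(a a a a⁻¹ a a⁻¹ a⁻¹)ⁿ`, and none of the other three patterns ever does, so
interleaving with some `b ≠ 1` of `B` gives elements with `φ = n`.
-/

namespace List

variable {α : Type*} [DecidableEq α]

def infixCount (w : List α) : List α → ℕ
  | [] => 0
  | x :: L => (if w <+: x :: L then 1 else 0) + infixCount w L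

variable (w : List α)

lemma infixCount_cons (x : α) (L : List α) :
    infixCount w (x :: L) = (if w <+: x :: L then 1 else 0) + infixCount w L := rfl

lemma infixCount_le_length (L : List α) : infixCount w L ≤ L.length := by
  induction L with
  | nil => rfl
  | cons x L ih => rw [infixCount_cons, length_cons]; split_ifs <;> omega

lemma infixCount_add_le_append (L₁ L₂ : List α) :
    infixCount w L₁ + infixCount w L₂ ≤ infixCount w (L₁ ++ L₂) := by
  induction L₁ with
  | nil => simp [infixCount]
  | cons x L₁ ih =>
    have : w <+: x :: L₁ → w <+: x :: L₁ ++ L₂ := fun h => h.trans (prefix_append _ _)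
    rw [cons_append, infixCount_cons, infixCount_cons]
    split_ifs <;> grind

lemma infixCount_append_le (L₁ L₂ : List α) :
    infixCount w (L₁ ++ L₂) ≤ infixCount w L₁ + infixCount w L₂ + min L₁.length w.length := by
  induction L₁ with
  | nil => simp [infixCount]
  | cons x L₁ ih =>
    have : w.length ≤ (x :: L₁).length → w <+: x :: L₁ ++ L₂ → w <+: x :: L₁ :=
      fun hlen h => prefix_of_prefix_length_le h (prefix_append _ _) hlen
    rw [cons_append, infixCount_cons, infixCount_cons, length_cons] at *
    split_ifs <;> grind

/-- An occurrence of `w` starting in `K` cannot reach across `M` into `L`. -/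
lemma infixCount_append_append_add {K M : List α} (L : List α) (hM : w.length ≤ M.length + 1) :
    infixCount w (K ++ M ++ L) + infixCount w M =
      infixCount w (K ++ M) + infixCount w (M ++ L) := by
  induction K with
  | nil => simp [Nat.add_comm]
  | cons x K ih =>
    have : w <+: x :: (K ++ M ++ L) ↔ w <+: x :: (K ++ M) := by
      refine ⟨fun h => prefix_of_prefix_length_le h ?_ ?_, fun h => h.trans ?_⟩
      · simp
      · simp; omega
      · simp
    simp only [cons_append, infixCount_cons, this]
    omega

lemma infixCount_map {β : Type*} [DecidableEq β] {f : α → β} (hf : Function.Injective f)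
    (L : List α) : infixCount (w.map f) (L.map f) = infixCount w L := by
  induction L with
  | nil => rfl
  | cons x L ih =>
    have := prefix_map_iff_of_injective hf (l₁ := w) (l₂ := x :: L)
    simp only [map_cons, infixCount_cons, ih] at this ⊢
    simp only [this]

section Skew

variable [InvolutiveInv α]

def skewCount (L : List α) : ℤ :=
  infixCount w L - infixCount w L.reverse + infixCount (w.map (·⁻¹)) L
    - infixCount (w.map (·⁻¹)) L.reverse

lemma skewCount_reverse (L : List α) : skewCount w L.reverse = -skewCount w L := by
  simp only [skewCount, reverse_reverse]; ring

lemma skewCount_map_inv (L : List α) : skewCount w (L.map (·⁻¹)) = skewCount w L := by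
  have h (v M : List α) : infixCount v (M.map (·⁻¹)) = infixCount (v.map (·⁻¹)) M := by
    rw [← infixCount_map (v.map (·⁻¹)) inv_injective, map_map]; simp
  simp only [skewCount, ← map_reverse, h, map_map, inv_comp_inv, map_id]
  ring

lemma abs_skewCount_le (L : List α) : |skewCount w L| ≤ 2 * L.length := by
  have := infixCount_le_length w L
  have := infixCount_le_length w L.reverse
  have := infixCount_le_length (w.map (·⁻¹)) L
  have := infixCount_le_length (w.map (·⁻¹)) L.reverse
  simp only [length_reverse] at *
  rw [skewCount, abs_le]; constructor <;> linarith

lemma abs_skewCount_append_sub_le (L₁ L₂ : List α) :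
    |skewCount w (L₁ ++ L₂) - skewCount w L₁ - skewCount w L₂| ≤ 2 * w.length := by
  have h (v M N : List α) : infixCount v M + infixCount v N ≤ infixCount v (M ++ N) ∧
      infixCount v (M ++ N) ≤ infixCount v M + infixCount v N + v.length :=
    ⟨infixCount_add_le_append v M N, (infixCount_append_le v M N).trans (by simp)⟩
  have h₁ := h w L₁ L₂
  have h₂ := h w L₂.reverse L₁.reverse
  have h₃ := h (w.map (·⁻¹)) L₁ L₂
  have h₄ := h (w.map (·⁻¹)) L₂.reverse L₁.reverse
  simp only [skewCount, reverse_append, length_map] at *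
  rw [abs_le]; constructor <;> omega

lemma abs_skewCount_append_append_sub_le (A B C : List α) :
    |skewCount w (A ++ B ++ C) - skewCount w A - skewCount w B - skewCount w C|
      ≤ 4 * w.length := by
  have h₁ := abs_skewCount_append_sub_le w (A ++ B) C
  have h₂ := abs_skewCount_append_sub_le w A B
  rw [abs_le] at *
  constructor <;> linarith

lemma skewCount_append_append_add {K M : List α} (L : List α) (hM : w.length ≤ M.length + 1) :
    skewCount w (K ++ M ++ L) + skewCount w M = skewCount w (K ++ M) + skewCount w (M ++ L) := by
  have h (v : List α) (hv : v.length ≤ M.length + 1) :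
      (infixCount v (K ++ M ++ L) : ℤ) + infixCount v M =
        infixCount v (K ++ M) + infixCount v (M ++ L) := by
    exact_mod_cast infixCount_append_append_add v L hv
  have h' (v : List α) (hv : v.length ≤ M.length + 1) :
      (infixCount v (K ++ M ++ L).reverse : ℤ) + infixCount v M.reverse =
        infixCount v (K ++ M).reverse + infixCount v (M ++ L).reverse := by
    simp only [reverse_append, ← append_assoc]
    have := infixCount_append_append_add v (K := L.reverse) (M := M.reverse) K.reverse
      (by simpa using hv)
    omega
  have hw : (w.map (·⁻¹)).length ≤ M.length + 1 := by simpa using hM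
  simp only [skewCount]
  linarith [h w hM, h' w hM, h _ hw, h' _ hw]

end Skew

end List

namespace Monoid.CoprodI

variable {ι : Type*} {M : ι → Type*}

section Letters

def alternating {i j : ι} (L : List (M i)) (b : M j) : List (Σ k, M k) :=
  L.flatMap fun x => [⟨i, x⟩, ⟨j, b⟩]

variable [DecidableEq ι]

def syllablesIn (i : ι) (L : List (Σ j, M j)) : List (M i) :=
  L.filterMap fun l => if h : l.1 = i then some (h ▸ l.2) else none

variable {i : ι}

@[simp] lemma syllablesIn_append (L₁ L₂ : List (Σ j, M j)) :
    syllablesIn i (L₁ ++ L₂) = syllablesIn i L₁ ++ syllablesIn i L₂ :=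
  List.filterMap_append

@[simp] lemma syllablesIn_reverse (L : List (Σ j, M j)) :
    syllablesIn i L.reverse = (syllablesIn i L).reverse :=
  List.filterMap_reverse

lemma length_syllablesIn_le (L : List (Σ j, M j)) : (syllablesIn i L).length ≤ L.length :=
  List.length_filterMap_le _ _

lemma syllablesIn_alternating {j : ι} (hij : i ≠ j) (L : List (M i)) (b : M j) :
    syllablesIn i (alternating L b) = L := by
  induction L with
  | nil => rfl
  | cons x L ih => simpa [alternating, syllablesIn, hij.symm] using ih

end Letters

variable [∀ i, Group (M i)]

def IsReduced (L : List (Σ i, M i)) : Prop :=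
  (∀ l ∈ L, l.2 ≠ 1) ∧ (L.map Sigma.fst).IsChain (· ≠ ·)

def ofSyllables (L : List (Σ i, M i)) : CoprodI M :=
  (L.map fun l => of l.2).prod

def invRev (L : List (Σ i, M i)) : List (Σ i, M i) :=
  (L.map fun l => ⟨l.1, l.2⁻¹⟩).reverse

@[simp] lemma ofSyllables_nil : ofSyllables ([] : List (Σ i, M i)) = 1 := rfl

@[simp] lemma ofSyllables_cons (l : Σ i, M i) (L : List (Σ i, M i)) :
    ofSyllables (l :: L) = of l.2 * ofSyllables L := List.prod_cons

@[simp] lemma ofSyllables_append (L₁ L₂ : List (Σ i, M i)) :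
    ofSyllables (L₁ ++ L₂) = ofSyllables L₁ * ofSyllables L₂ := by
  simp [ofSyllables]

lemma syllables_ofSyllables {L : List (Σ i, M i)} (hL : IsReduced L) :
    syllables (ofSyllables L) = L :=
  congrArg Word.toList (Word.equiv.apply_symm_apply ⟨L, hL.1, (List.isChain_map _).1 hL.2⟩)

lemma ofSyllables_syllables (g : CoprodI M) : ofSyllables (syllables g) = g :=
  Word.equiv.symm_apply_apply g

lemma isReduced_syllables (g : CoprodI M) : IsReduced (syllables g) :=
  ⟨(Word.equiv g).ne_one, (List.isChain_map _).2 (Word.equiv g).chain_ne⟩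

@[simp] lemma syllables_one : syllables (1 : CoprodI M) = [] :=
  syllables_ofSyllables (L := []) ⟨by simp, List.isChain_nil⟩

lemma IsReduced.infix {L L' : List (Σ i, M i)} (hL : IsReduced L) (h : L' <:+: L) :
    IsReduced L' :=
  ⟨fun l hl => hL.1 l (h.subset hl), hL.2.infix (h.map _)⟩

lemma IsReduced.append {L₁ L₂ : List (Σ i, M i)} (h₁ : IsReduced L₁) (h₂ : IsReduced L₂)
    (h : ∀ x ∈ L₁.getLast?, ∀ y ∈ L₂.head?, x.1 ≠ y.1) : IsReduced (L₁ ++ L₂) := by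
  refine ⟨by simpa [or_imp, forall_and] using ⟨h₁.1, h₂.1⟩, ?_⟩
  rw [List.map_append, List.isChain_append]
  refine ⟨h₁.2, h₂.2, ?_⟩
  simp only [List.getLast?_map, List.head?_map, Option.mem_map]
  rintro _ ⟨x, hx, rfl⟩ _ ⟨y, hy, rfl⟩
  exact h x hx y hy

lemma IsReduced.merge {L₁ L₂ : List (Σ i, M i)} {i : ι} {x y z : M i}
    (h₁ : IsReduced (L₁ ++ [⟨i, x⟩])) (h₂ : IsReduced (⟨i, y⟩ :: L₂)) (hz : z ≠ 1) :
    IsReduced (L₁ ++ ⟨i, z⟩ :: L₂) := by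
  refine ⟨?_, ?_⟩
  · simp only [List.mem_append, List.mem_cons]
    rintro l (hl | rfl | hl)
    · exact h₁.1 l (by simp [hl])
    · exact hz
    · exact h₂.1 l (by simp [hl])
  · have c₁ : (L₁.map Sigma.fst ++ [i]).IsChain (· ≠ ·) := by simpa using h₁.2
    have c₂ : ([i] ++ L₂.map Sigma.fst).IsChain (· ≠ ·) := by simpa using h₂.2
    simpa using c₁.append_overlap c₂ (by simp)

lemma isReduced_alternating {i j : ι} (hij : i ≠ j) {L : List (M i)} (hL : ∀ x ∈ L, x ≠ 1)
    {b : M j} (hb : b ≠ 1) : IsReduced (alternating L b) := by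
  refine ⟨?_, ?_⟩
  · simp only [alternating, List.mem_flatMap, List.mem_cons, List.not_mem_nil, or_false]
    rintro _ ⟨x, hx, rfl | rfl⟩
    exacts [hL x hx, hb]
  have : ((⟨j, b⟩ :: alternating L b).map Sigma.fst).IsChain (· ≠ ·) := by
    clear hL
    induction L with
    | nil => simp [alternating]
    | cons x L ih => simpa [alternating, hij, hij.symm] using ih
  exact this.tail

theorem exists_syllables_mul {X Y : List (Σ i, M i)} (hX : IsReduced X) (hY : IsReduced Y) :
    ∃ P U S V T C : List (Σ i, M i), X = P ++ U ++ S ∧ Y = invRev S ++ V ++ T ∧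
      U.length ≤ 1 ∧ V.length ≤ 1 ∧ C.length ≤ 1 ∧
      syllables (ofSyllables X * ofSyllables Y) = P ++ C ++ T := by
  induction X using List.reverseRecOn generalizing Y with
  | nil =>
    exact ⟨[], [], [], [], Y, [], by simp, by simp [invRev], by simp, by simp, by simp,
      by simp [syllables_ofSyllables hY]⟩
  | append_singleton X₀ x ih =>
    rcases Y with _ | ⟨y, Y₁⟩
    · exact ⟨X₀ ++ [x], [], [], [], [], [], by simp, by simp [invRev], by simp, by simp, by simp,
        by rw [ofSyllables_nil, mul_one, syllables_ofSyllables hX]; simp⟩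
    obtain ⟨i, x⟩ := x
    obtain ⟨j, y⟩ := y
    by_cases hij : i = j
    · subst hij
      by_cases hxy : x * y = 1
      · obtain ⟨P, U, S, V, T, C, rfl, hY₁, hU, hV, hC, hprod⟩ :=
          ih (hX.infix (List.infix_append' [] _ _)) (hY.infix (List.suffix_cons _ _).isInfix)
        refine ⟨P, U, S ++ [⟨i, x⟩], V, T, C, by simp, ?_, hU, hV, hC, ?_⟩
        · simp [invRev, eq_inv_of_mul_eq_one_right hxy, hY₁]
        · rw [← hprod]
          simp only [ofSyllables_append, ofSyllables_cons, ofSyllables_nil, mul_one]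
          rw [eq_inv_of_mul_eq_one_right hxy, map_inv]
          group
      · refine ⟨X₀, [⟨i, x⟩], [], [⟨i, y⟩], Y₁, [⟨i, x * y⟩], by simp, by simp [invRev],
          by simp, by simp, by simp, ?_⟩
        rw [List.append_assoc, List.singleton_append, ← syllables_ofSyllables (hX.merge hY hxy)]
        simp [mul_assoc]
    · refine ⟨X₀ ++ [⟨i, x⟩], [], [], [], ⟨j, y⟩ :: Y₁, [], by simp, by simp [invRev],
        by simp, by simp, by simp, ?_⟩
      rw [← ofSyllables_append, syllables_ofSyllables (hX.append hY (by simpa using hij))]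
      simp

variable [DecidableEq ι] (i : ι)

lemma syllablesIn_invRev (L : List (Σ j, M j)) :
    syllablesIn i (invRev L) = ((syllablesIn i L).map (·⁻¹)).reverse := by
  simp only [invRev, syllablesIn, List.filterMap_reverse, List.filterMap_map, List.map_filterMap]
  congr 2
  funext ⟨j, x⟩
  by_cases h : j = i
  · subst h; simp
  · simp [h]

noncomputable def skewSyllableCount [DecidableEq (M i)] (w : List (M i)) (g : CoprodI M) : ℤ :=
  List.skewCount w (syllablesIn i (syllables g))

variable [DecidableEq (M i)] (w : List (M i))

lemma abs_skewSyllableCount_mul_sub_le (g h : CoprodI M) :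
    |skewSyllableCount i w (g * h) - skewSyllableCount i w g - skewSyllableCount i w h|
      ≤ 12 * w.length + 6 := by
  obtain ⟨P, U, S, V, T, C, hg, hh, hU, hV, hC, hgh⟩ :=
    exists_syllables_mul (isReduced_syllables g) (isReduced_syllables h)
  rw [ofSyllables_syllables, ofSyllables_syllables] at hgh
  let f (L : List (Σ j, M j)) : ℤ := List.skewCount w (syllablesIn i L)
  have hf₃ (A B C : List (Σ j, M j)) : |f (A ++ B ++ C) - f A - f B - f C| ≤ 4 * w.length := by
    simpa [f] using List.abs_skewCount_append_append_sub_le w (syllablesIn i A) _ _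
  have hf₁ {A : List (Σ j, M j)} (hA : A.length ≤ 1) : |f A| ≤ 2 := by
    have := (length_syllablesIn_le (i := i) A).trans hA
    have := List.abs_skewCount_le w (syllablesIn i A)
    simp only [f]; omega
  have hS : f (invRev S) = -f S := by
    simp only [f, syllablesIn_invRev, List.skewCount_reverse, List.skewCount_map_inv]
  have := hf₃ P U S
  have := hf₃ (invRev S) V T
  have := hf₃ P C T
  have := hf₁ hU
  have := hf₁ hV
  have := hf₁ hC
  have hfg : skewSyllableCount i w g = f (P ++ U ++ S) := by rw [skewSyllableCount, hg]
  have hfh : skewSyllableCount i w h = f (invRev S ++ V ++ T) := by rw [skewSyllableCount, hh]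
  have hfgh : skewSyllableCount i w (g * h) = f (P ++ C ++ T) := by
    rw [skewSyllableCount, hgh]
  rw [hfg, hfh, hfgh]
  rw [abs_le] at *
  constructor <;> linarith

lemma skewSyllableCount_eq_zero_of_isPalindrome {p : CoprodI M} (hp : IsPalindrome p) :
    skewSyllableCount i w p = 0 := by
  have := List.skewCount_reverse w (syllablesIn i (syllables p))
  rw [← syllablesIn_reverse, hp] at this
  rw [skewSyllableCount]; linarith

lemma abs_skewSyllableCount_prod_le {L : List (CoprodI M)} (hL : ∀ p ∈ L, IsPalindrome p) :
    |skewSyllableCount i w L.prod| ≤ (12 * w.length + 6) * L.length := by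
  induction L with
  | nil => simp [skewSyllableCount, List.skewCount, syllablesIn, List.infixCount]
  | cons p L ih =>
    have hp := skewSyllableCount_eq_zero_of_isPalindrome i w (hL p (by simp))
    have hmul := abs_skewSyllableCount_mul_sub_le i w p L.prod
    have := ih fun q hq => hL q (by simp [hq])
    rw [hp, sub_zero] at hmul
    rw [List.prod_cons, List.length_cons]
    rw [abs_le] at *
    push_cast
    constructor <;> linarith

end Monoid.CoprodI

section Witness

variable {G : Type*} [Group G] [DecidableEq G]

def witnessPeriod (a : G) : List G := [a, a, a, a⁻¹, a, a⁻¹, a⁻¹]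

def witnessPattern (a : G) : List G := [a, a, a, a⁻¹, a]

lemma skewCount_witnessPattern_flatten_replicate {a : G} (ha : a ≠ a⁻¹) (n : ℕ) :
    (witnessPattern a).skewCount (List.replicate n (witnessPeriod a)).flatten = n := by
  have ha' : a⁻¹ ≠ a := ha.symm
  have h₁ : (witnessPattern a).skewCount (witnessPeriod a) = 1 := by
    simp [witnessPattern, witnessPeriod, List.skewCount, List.infixCount, ha, ha']
  have h₂ : (witnessPattern a).skewCount (witnessPeriod a ++ witnessPeriod a) = 2 := by
    simp [witnessPattern, witnessPeriod, List.skewCount, List.infixCount, ha, ha']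
  induction n with
  | zero => simp [List.skewCount, List.infixCount]
  | succ n ih =>
    rcases n with _ | n
    · simpa using h₁
    have := (witnessPattern a).skewCount_append_append_add (K := witnessPeriod a)
      (M := witnessPeriod a) (List.replicate n (witnessPeriod a)).flatten
      (by simp [witnessPattern, witnessPeriod])
    simp only [List.replicate_succ, List.flatten_cons, ← List.append_assoc] at ih ⊢
    push_cast at ih ⊢
    linarith

end Witness

theorem palindromic_width_infinite_of_order_ge_three_general {M : Bool → Type*} [∀ b, Group (M b)]
    [Nontrivial (M false)]
    (a : M true) (ha1 : a ≠ 1) (ha2 : a ≠ a⁻¹) :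
    ∀ k : ℕ, ∃ g : CoprodI M, ¬ ∃ L : List (CoprodI M),
      L.length ≤ k ∧ (∀ p ∈ L, IsPalindrome p) ∧ L.prod = g := by
  intro k
  obtain ⟨b, hb⟩ := exists_ne (1 : M false)
  set Q := (List.replicate (66 * k + 1) (witnessPeriod a)).flatten
  have hQ : ∀ x ∈ Q, x ≠ 1 := by
    simp [Q, witnessPeriod, or_imp, forall_and, ha1]
  refine ⟨ofSyllables (alternating Q b), ?_⟩
  rintro ⟨L, hk, hpal, hprod⟩
  have hbound := abs_skewSyllableCount_prod_le true (witnessPattern a) hpal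
  rw [hprod, skewSyllableCount, syllables_ofSyllables (isReduced_alternating (by simp) hQ hb),
    syllablesIn_alternating (by simp), skewCount_witnessPattern_flatten_replicate ha2] at hbound
  simp only [witnessPattern, List.length_cons, List.length_nil, abs_le] at hbound
  omega

/-- If `A` contains an element of order at least 3, the palindromic width of
the free product `A * B` is infinite. -/
theorem palindromic_width_infinite_of_order_ge_three {M : Bool → Type*} [∀ b, Group (M b)]
    [Nontrivial (M true)] [Nontrivial (M false)]
    (a : M true) (ha1 : a ≠ 1) (ha2 : a ≠ a⁻¹) :
    ∀ k : ℕ, ∃ g : CoprodI M, ¬ ∃ L : List (CoprodI M),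
      L.length ≤ k ∧ (∀ p ∈ L, IsPalindrome p) ∧ L.prod = g :=
  palindromic_width_infinite_of_order_ge_three_general a ha1 ha2
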